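/- arXiv:1812.11774 — 2 statements merged into one kernel-verified Lean document; each statement's English description precedes it below -/
import Mathlib

section
/- For every integer n ≥ 1, a(n) ≤ ((1 − 1/e)n + 1/e) · n!; that is, the expected size of the matching produced by the Ranking greedy process on MonotoneG under a uniformly random permutation is at most (1 − 1/e)n + 1/e. -/
open scoped Classical

noncomputable section

/-- The element of `c` minimizing `key`, if `c` is nonempty. -/
def pickMin {n : ℕ} {α : Type*} [LinearOrder α] (key : Fin n → α)
    (c : Finset (Fin n)) : Option (Fin n) :=
  if h : c.Nonempty then some (Classical.choose (Finset.exists_min_image c key h)) else none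

/-- The set of matched `V`-vertices after the first `j` arrivals of the online greedy
process on the bipartite graph with `U`-side arrival order `u_0, u_1, …` and adjacency
`adj`, in which each arriving `u_j` is matched to its currently unmatched neighbor
minimizing `key` (if any). -/
def greedyRun {n : ℕ} {α : Type*} [LinearOrder α] (adj : ℕ → Fin n → Prop)
    (key : Fin n → α) : ℕ → Finset (Fin n)
  | 0 => ∅
  | j + 1 =>
    match pickMin key ((Finset.univ.filter fun i => adj j i) \ greedyRun adj key j) with
    | some v => insert v (greedyRun adj key j)
    | none => greedyRun adj key j

/-- The `V`-vertex that the arriving vertex `u_j` (0-indexed) gets matched to, if any. -/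
def greedyMatchU {n : ℕ} {α : Type*} [LinearOrder α] (adj : ℕ → Fin n → Prop)
    (key : Fin n → α) (j : ℕ) : Option (Fin n) :=
  pickMin key ((Finset.univ.filter fun i => adj j i) \ greedyRun adj key j)

/-- Adjacency of the monotone graph `MonotoneG` (0-indexed):
`u_j` is adjacent to `v_i` iff `j ≤ i`. -/
def monoAdj (n : ℕ) : ℕ → Fin n → Prop := fun j i => j ≤ (i : ℕ)

/-- The set of matched `V`-vertices produced by the Ranking greedy process on `MonotoneG`
with permutation `π` (where `π i` is the rank of `v_i`, 0-indexed). -/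
def rankMatched (n : ℕ) (π : Equiv.Perm (Fin n)) : Finset (Fin n) :=
  greedyRun (monoAdj n) (fun i => π i) n

/-- `x(π)`: the number of edges of the matching produced by Ranking on `MonotoneG`. -/
def xSize (n : ℕ) (π : Equiv.Perm (Fin n)) : ℕ := (rankMatched n π).card

/-- `a(n) = Σ_π x(π)`, over all `n!` permutations. -/
def aVal (n : ℕ) : ℕ := ∑ π : Equiv.Perm (Fin n), xSize n π

/-- `a(n,i)` (with `i` 1-indexed): the number of permutations `π` of `{1,…,n}` for which
the vertex of rank `i` under `π` is matched by the Ranking greedy process on `MonotoneG`. -/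
def aIdx (n i : ℕ) : ℕ :=
  (Finset.univ.filter fun π : Equiv.Perm (Fin n) =>
    ∃ v : Fin n, (π v : ℕ) = i - 1 ∧ v ∈ rankMatched n π).card

/-- `d(m,i)` (with `i` 1-indexed): the number of permutations of `{1,…,m}` all of whose
fixed points (if any) lie among the first `i` items. -/
def dIdx (m i : ℕ) : ℕ :=
  (Finset.univ.filter fun σ : Equiv.Perm (Fin m) => ∀ x, σ x = x → (x : ℕ) < i).card

/-- `d(m)`: the number of derangements of `{1,…,m}`. -/
def numDer (m : ℕ) : ℕ :=
  (Finset.univ.filter fun σ : Equiv.Perm (Fin m) => ∀ x, σ x ≠ x).card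

/-- The key for the greedy-by-price process: buy the cheapest available item,
breaking ties in favor of the smaller index. -/
def priceKey {n : ℕ} (p : Fin n → ℝ) : Fin n → Lex (ℝ × ℕ) := fun i => toLex (p i, (i : ℕ))

/-- The utility `y(u_j)` of buyer `u_j` (0-indexed) in the greedy-by-price process:
`1 - p v` if `u_j` buys item `v`, and `0` if `u_j` remains unmatched. -/
def utility (n : ℕ) (adj : ℕ → Fin n → Prop) (p : Fin n → ℝ) (j : ℕ) : ℝ :=
  (greedyMatchU adj (priceKey p) j).elim 0 (fun v => 1 - p v)

/-- The revenue `r(v)` from item `v` in the greedy-by-price process: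
`p v` if `v` is sold, and `0` otherwise. -/
def revenue (n : ℕ) (adj : ℕ → Fin n → Prop) (p : Fin n → ℝ) (v : Fin n) : ℝ :=
  if v ∈ greedyRun adj (priceKey p) n then p v else 0

/-- The `m`-th harmonic number `H_m = Σ_{i=1}^m 1/i` (with `H_0 = 0`). -/
def harm (m : ℕ) : ℝ := ∑ i ∈ Finset.range m, (1 : ℝ) / (i + 1)

/-!
Run Ranking on `MonotoneG` in order of rank rather than of arrival: if `t` vertices of rank `< r`
are matched, they are matched to `u_0, …, u_{t-1}`, so the vertex of rank `r` is matched (to `u_t`)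
iff its index is at least `t`. Let `a(n, r)` count the permutations in which the vertex of rank `r`
is matched. Exchanging the ranks `r` and `r + 1`, and deleting the vertex of rank `r` when its index
is exactly `t`, give `a(n + 1, r) = a(n + 1, r + 1) + a(n, r)`; hence
`a(n, r) = ∑ⱼ (-1)ʲ C(r, j) (n - j)!`, the number of permutations of `n` points fixing none of the
first `r`. Summing over `r` gives `a(n) = n! (n + 1 - (n + 1) P (n + 1) - P n)` with
`P m = ∑_{k<m} (-1)ᵏ / k!`, and the bound follows from `e⁻¹ ≤ P m` for odd `m`.
-/

open Finset Equiv
open scoped Nat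

/-- The number of matched vertices among the ranks `< r`, when the vertex of rank `s` has index
`f s` for every `s`. -/
def numMatched (f : ℕ → ℕ) : ℕ → ℕ
  | 0 => 0
  | r + 1 => numMatched f r + if numMatched f r ≤ f r then 1 else 0

section NumMatched

variable {f g : ℕ → ℕ}

lemma numMatched_succ_of_le {r : ℕ} (h : numMatched f r ≤ f r) :
    numMatched f (r + 1) = numMatched f r + 1 := by
  rw [numMatched, if_pos h]

lemma numMatched_succ_of_lt {r : ℕ} (h : f r < numMatched f r) :
    numMatched f (r + 1) = numMatched f r := by
  rw [numMatched, if_neg (by omega), add_zero]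

lemma numMatched_succ_le (r : ℕ) : numMatched f (r + 1) ≤ numMatched f r + 1 := by
  rw [numMatched]; split <;> omega

lemma numMatched_mono : Monotone (numMatched f) :=
  monotone_nat_of_le_succ fun r => by rw [numMatched]; omega

lemma numMatched_le (r : ℕ) : numMatched f r ≤ r := by
  induction r with
  | zero => rfl
  | succ r ih => have := numMatched_succ_le (f := f) r; omega

lemma exists_matched_of_lt_numMatched {j b : ℕ} (h : j < numMatched f b) :
    ∃ ρ < b, numMatched f ρ = j ∧ numMatched f ρ ≤ f ρ := by
  induction b with
  | zero => exact absurd h (Nat.not_lt_zero j)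
  | succ b ih =>
    by_cases hb : j < numMatched f b
    · obtain ⟨ρ, hρ, hρj⟩ := ih hb
      exact ⟨ρ, by omega, hρj⟩
    · have := numMatched_succ_le (f := f) b
      refine ⟨b, by omega, by omega, ?_⟩
      by_contra hlt
      rw [numMatched_succ_of_lt (by omega)] at h
      omega

lemma eq_of_numMatched_eq {r₁ r₂ : ℕ} (h₁ : numMatched f r₁ ≤ f r₁)
    (h₂ : numMatched f r₂ ≤ f r₂) (he : numMatched f r₁ = numMatched f r₂) : r₁ = r₂ := by
  by_contra hne
  wlog hlt : r₁ < r₂ generalizing r₁ r₂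
  · exact this h₂ h₁ he.symm (Ne.symm hne) (by omega)
  have := numMatched_mono (f := f) (show r₁ + 1 ≤ r₂ by omega)
  rw [numMatched_succ_of_le h₁] at this
  omega

lemma numMatched_eq_sum (m : ℕ) :
    numMatched f m = ∑ r ∈ range m, if numMatched f r ≤ f r then 1 else 0 := by
  induction m with
  | zero => rfl
  | succ m ih => rw [sum_range_succ, ← ih, numMatched]

lemma numMatched_congr {r : ℕ} (h : ∀ s < r, f s = g s) : numMatched f r = numMatched g r := by
  induction r with
  | zero => rfl
  | succ r ih => rw [numMatched, numMatched, ih fun s hs => h s (by omega), h r (by omega)]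

end NumMatched

def permSeq {n : ℕ} (σ : Perm (Fin n)) (r : ℕ) : ℕ := if h : r < n then σ ⟨r, h⟩ else 0

lemma permSeq_of_lt {n r : ℕ} (σ : Perm (Fin n)) (h : r < n) : permSeq σ r = σ ⟨r, h⟩ :=
  dif_pos h

lemma permSeq_val {n : ℕ} (σ : Perm (Fin n)) (ρ : Fin n) : permSeq σ ρ = σ ρ :=
  permSeq_of_lt σ ρ.isLt

lemma pickMin_eq_none {n : ℕ} {α : Type*} [LinearOrder α] {key : Fin n → α}
    {c : Finset (Fin n)} (h : pickMin key c = none) : c = ∅ := by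
  by_contra hc
  rw [pickMin, dif_pos (nonempty_of_ne_empty hc)] at h
  exact Option.some_ne_none _ h

lemma pickMin_eq_some {n : ℕ} {α : Type*} [LinearOrder α] {key : Fin n → α}
    {c : Finset (Fin n)} {v : Fin n} (h : pickMin key c = some v) :
    v ∈ c ∧ ∀ b ∈ c, key v ≤ key b := by
  unfold pickMin at h
  split_ifs at h with hc
  cases h
  exact Classical.choose_spec (exists_min_image c key hc)

lemma greedyRun_succ {n : ℕ} {α : Type*} [LinearOrder α] (adj : ℕ → Fin n → Prop)
    (key : Fin n → α) (j : ℕ) :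
    greedyRun adj key (j + 1) = (greedyMatchU adj key j).toFinset ∪ greedyRun adj key j := by
  rw [greedyRun, greedyMatchU]
  split <;> simp_all

section Ranking

variable {n : ℕ} (π : Perm (Fin n))

def matchLevel (i : Fin n) : ℕ := numMatched (permSeq π.symm) (π i)

lemma permSeq_symm_apply (i : Fin n) : permSeq π.symm (π i) = i := by
  rw [permSeq_val, symm_apply_apply]

variable {π}

lemma eq_of_matchLevel_eq {i i' : Fin n} (h : matchLevel π i ≤ i) (h' : matchLevel π i' ≤ i')
    (he : matchLevel π i = matchLevel π i') : i = i' := by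
  rw [matchLevel, ← permSeq_symm_apply π i] at h
  rw [matchLevel, ← permSeq_symm_apply π i'] at h'
  exact π.injective (Fin.ext (eq_of_numMatched_eq h h' he))

lemma exists_matchLevel_eq_of_lt {j : ℕ} {v : Fin n} (h : j < matchLevel π v) :
    ∃ w, π w < π v ∧ matchLevel π w = j ∧ matchLevel π w ≤ w := by
  obtain ⟨ρ, hρv, hρj, hρ⟩ := exists_matched_of_lt_numMatched h
  have hρn : ρ < n := hρv.trans (π v).isLt
  refine ⟨π.symm ⟨ρ, hρn⟩, ?_, ?_, ?_⟩ <;>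
    simp only [matchLevel, apply_symm_apply, Fin.lt_def]
  · exact hρv
  · exact hρj
  · rwa [← permSeq_of_lt π.symm hρn]

lemma greedyMatchU_monoAdj_toFinset {j : ℕ}
    (hrun : greedyRun (monoAdj n) (fun i => π i) j =
      univ.filter fun i => matchLevel π i < j ∧ matchLevel π i ≤ i) :
    (greedyMatchU (monoAdj n) (fun i => π i) j).toFinset =
      univ.filter fun i => matchLevel π i = j ∧ j ≤ i := by
  have havail : ((univ.filter fun i => monoAdj n j i) \ greedyRun (monoAdj n) (fun i => π i) j) =
      univ.filter fun i : Fin n => j ≤ i ∧ j ≤ matchLevel π i := by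
    ext i
    simp only [hrun, mem_sdiff, mem_filter, mem_univ, true_and]
    unfold monoAdj
    omega
  have hunique : ∀ v, matchLevel π v = j → j ≤ v →
      (univ.filter fun i => matchLevel π i = j ∧ j ≤ i) = {v} := by
    intro v hv hjv
    ext i
    simp only [mem_filter, mem_univ, true_and, mem_singleton]
    exact ⟨fun ⟨hi, hji⟩ => eq_of_matchLevel_eq (by omega) (by omega) (hi.trans hv.symm),
      by rintro rfl; exact ⟨hv, hjv⟩⟩
  rw [greedyMatchU, havail]
  rcases hpick : pickMin (fun i => π i) (univ.filter fun i : Fin n => j ≤ i ∧ j ≤ matchLevel π i)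
    with _ | v
  · rw [Option.toFinset_none, eq_comm, ← subset_empty, ← pickMin_eq_none hpick]
    intro i
    simp only [mem_filter, mem_univ, true_and]
    omega
  obtain ⟨hv, hmin⟩ := pickMin_eq_some hpick
  simp only [mem_filter, mem_univ, true_and] at hv
  suffices hvj : matchLevel π v = j by rw [Option.toFinset_some, hunique v hvj hv.1]
  by_contra hne
  obtain ⟨w, hwv, hwj, hw⟩ := exists_matchLevel_eq_of_lt (show j < matchLevel π v by omega)
  exact absurd (hmin w (by simp only [mem_filter, mem_univ, true_and]; omega)) (not_le.2 hwv)

lemma greedyRun_monoAdj (j : ℕ) :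
    greedyRun (monoAdj n) (fun i => π i) j =
      univ.filter fun i => matchLevel π i < j ∧ matchLevel π i ≤ i := by
  induction j with
  | zero => simp [greedyRun]
  | succ j ih =>
    rw [greedyRun_succ, greedyMatchU_monoAdj_toFinset ih, ih]
    ext i
    simp only [mem_union, mem_filter, mem_univ, true_and]
    omega

variable (π)

lemma xSize_eq_numMatched : xSize n π = numMatched (permSeq π.symm) n := by
  rw [xSize, rankMatched, greedyRun_monoAdj, numMatched_eq_sum, ← Fin.sum_univ_eq_sum_range,
    ← card_filter]
  refine card_equiv π fun i => ?_
  have := numMatched_le (f := permSeq π.symm) (π i)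
  rw [mem_filter_univ, mem_filter_univ]
  simp only [matchLevel, permSeq_symm_apply]
  omega

end Ranking

def matchedAtCount (n r : ℕ) : ℕ :=
  #{σ : Perm (Fin n) | numMatched (permSeq σ) r ≤ permSeq σ r}

lemma aVal_eq_sum_matchedAtCount (n : ℕ) : aVal n = ∑ r ∈ range n, matchedAtCount n r := by
  rw [aVal, ← Equiv.sum_comp (Equiv.inv (Perm (Fin n)))]
  simp only [Equiv.inv_apply, xSize_eq_numMatched, Perm.inv_def, symm_symm]
  rw [sum_congr rfl fun σ _ => numMatched_eq_sum n, sum_comm]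
  simp only [matchedAtCount, card_filter]

lemma not_matched_succ_iff_of_swap {f g : ℕ → ℕ} {r : ℕ} (hlow : ∀ s < r, f s = g s)
    (hr : f r = g (r + 1)) (hr' : f (r + 1) = g r) (hne : g r ≠ g (r + 1)) :
    ¬numMatched f (r + 1) ≤ f (r + 1) ↔
      ¬numMatched g r ≤ g r ∨ (g r = numMatched g r ∧ numMatched g (r + 1) ≤ g (r + 1)) := by
  have hT := numMatched_congr hlow
  simp only [numMatched, hT, hr, hr']
  split_ifs <;> omega

lemma card_not_matched_succ {n r : ℕ} (hr : r + 1 < n) :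
    #{σ : Perm (Fin n) | ¬numMatched (permSeq σ) (r + 1) ≤ permSeq σ (r + 1)} =
      #{σ : Perm (Fin n) | ¬numMatched (permSeq σ) r ≤ permSeq σ r} +
      #{σ : Perm (Fin n) | permSeq σ r = numMatched (permSeq σ) r ∧
        numMatched (permSeq σ) (r + 1) ≤ permSeq σ (r + 1)} := by
  set a : Fin n := ⟨r, by omega⟩
  set b : Fin n := ⟨r + 1, hr⟩
  rw [← card_union_of_disjoint (disjoint_filter.2 fun σ _ h₁ h₂ => by omega), ← filter_or]
  refine card_equiv (Equiv.mulRight (swap a b)) fun σ => ?_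
  simp only [mem_filter, mem_univ, true_and, coe_mulRight]
  refine not_matched_succ_iff_of_swap (fun s hs => ?_) ?_ ?_ ?_
  · rw [permSeq_of_lt _ (by omega), permSeq_of_lt _ (by omega), Perm.mul_apply,
      swap_apply_of_ne_of_ne (by simp [a, Fin.ext_iff]; omega) (by simp [b, Fin.ext_iff]; omega)]
  · rw [permSeq_of_lt σ (show r < n by omega), permSeq_of_lt _ hr, Perm.mul_apply,
      swap_apply_right]
  · rw [permSeq_of_lt σ hr, permSeq_of_lt _ (show r < n by omega), Perm.mul_apply,
      swap_apply_left]
  · rw [permSeq_of_lt _ (show r < n by omega), permSeq_of_lt _ hr, Ne, Fin.val_inj,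
      (σ * swap a b).injective.eq_iff]
    simp [Fin.ext_iff]

lemma numMatched_eq_of_succAbove {f g : ℕ → ℕ} {q r : ℕ}
    (hlow : ∀ s < r, f s = if g s < q then g s else g s + 1)
    (hq : min (numMatched f r) (numMatched g r) ≤ q) : numMatched f r = numMatched g r := by
  suffices ∀ s ≤ r, numMatched f s = numMatched g s from this r le_rfl
  intro s hs
  induction s with
  | zero => rfl
  | succ s ih =>
    have ih := ih (by omega)
    have := numMatched_mono (f := f) (show s ≤ r by omega)
    have := numMatched_mono (f := g) (show s ≤ r by omega)
    rw [numMatched, numMatched, ih, hlow s (by omega)]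
    split_ifs <;> omega

lemma hit_and_matched_succ_iff_of_succAbove {f g : ℕ → ℕ} {q r : ℕ}
    (hlow : ∀ s < r, f s = if g s < q then g s else g s + 1)
    (hnext : f (r + 1) = if g r < q then g r else g r + 1) (hfr : f r = q) :
    (f r = numMatched f r ∧ numMatched f (r + 1) ≤ f (r + 1)) ↔
      (numMatched g r = q ∧ numMatched g r ≤ g r) := by
  constructor
  · rintro ⟨hhit, hmatched⟩
    have hT := numMatched_eq_of_succAbove hlow (by omega)
    rw [numMatched_succ_of_le (by omega), hnext] at hmatched
    split_ifs at hmatched <;> omega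
  · rintro ⟨hgq, hmatched⟩
    have hT := numMatched_eq_of_succAbove hlow (by omega)
    rw [numMatched_succ_of_le (by omega), hnext]
    split_ifs <;> omega

lemma Fin.val_succAbove {n : ℕ} (q : Fin (n + 1)) (w : Fin n) :
    (q.succAbove w : ℕ) = if (w : ℕ) < q then (w : ℕ) else (w : ℕ) + 1 := by
  unfold Fin.succAbove
  split_ifs <;> simp_all [Fin.lt_def, Fin.val_succ]

lemma permSeq_of_comp_succAbove {n r : ℕ} (hr : r < n) {σ : Perm (Fin (n + 1))}
    {τ : Perm (Fin n)} {q : Fin (n + 1)}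
    (h : ∀ s, σ ((⟨r, by omega⟩ : Fin (n + 1)).succAbove s) = q.succAbove (τ s))
    {s : ℕ} (hs : s ≤ r) :
    permSeq σ (if s < r then s else s + 1) =
      if permSeq τ s < q then permSeq τ s else permSeq τ s + 1 := by
  have hp : ((⟨r, by omega⟩ : Fin (n + 1)).succAbove ⟨s, by omega⟩ : ℕ) =
      if s < r then s else s + 1 := Fin.val_succAbove _ _
  rw [← hp, permSeq_val, h, Fin.val_succAbove, permSeq_of_lt τ (by omega)]

section DeleteInsert

variable {n : ℕ}

def insertPerm (p q : Fin (n + 1)) (τ : Perm (Fin n)) : Perm (Fin (n + 1)) :=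
  (finSuccEquiv' p).trans ((Equiv.optionCongr τ).trans (finSuccEquiv' q).symm)

def deletePerm (p : Fin (n + 1)) (σ : Perm (Fin (n + 1))) : Perm (Fin n) :=
  Equiv.removeNone ((finSuccEquiv' p).symm.trans (σ.trans (finSuccEquiv' (σ p))))

@[simp]
lemma insertPerm_apply_self (p q : Fin (n + 1)) (τ : Perm (Fin n)) : insertPerm p q τ p = q := by
  simp [insertPerm]

@[simp]
lemma insertPerm_apply_succAbove (p q : Fin (n + 1)) (τ : Perm (Fin n)) (s : Fin n) :
    insertPerm p q τ (p.succAbove s) = q.succAbove (τ s) := by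
  simp [insertPerm]

lemma apply_succAbove_eq_succAbove_deletePerm (p : Fin (n + 1)) (σ : Perm (Fin (n + 1)))
    (s : Fin n) : σ (p.succAbove s) = (σ p).succAbove (deletePerm p σ s) := by
  have hne : σ (p.succAbove s) ≠ σ p := fun h => Fin.succAbove_ne p s (σ.injective h)
  obtain ⟨w, hw⟩ := Fin.exists_succAbove_eq hne
  have hsome : some (deletePerm p σ s) = some w := by
    rw [deletePerm, Equiv.removeNone_some]
    all_goals simp [← hw]
  rw [← hw, Option.some_inj.1 hsome]

lemma deletePerm_insertPerm (p q : Fin (n + 1)) (τ : Perm (Fin n)) :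
    deletePerm p (insertPerm p q τ) = τ := by
  ext s
  have := apply_succAbove_eq_succAbove_deletePerm p (insertPerm p q τ) s
  rw [insertPerm_apply_succAbove, insertPerm_apply_self] at this
  exact congrArg Fin.val (Fin.succAbove_right_injective this).symm

lemma insertPerm_deletePerm (p : Fin (n + 1)) (σ : Perm (Fin (n + 1))) :
    insertPerm p (σ p) (deletePerm p σ) = σ := by
  ext x
  refine Fin.succAboveCases p ?_ (fun s => ?_) x
  · rw [insertPerm_apply_self]
  · rw [insertPerm_apply_succAbove, apply_succAbove_eq_succAbove_deletePerm]

end DeleteInsert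

lemma card_hit_matched_succ {n r : ℕ} (hr : r < n) :
    #{σ : Perm (Fin (n + 1)) | permSeq σ r = numMatched (permSeq σ) r ∧
      numMatched (permSeq σ) (r + 1) ≤ permSeq σ (r + 1)} = matchedAtCount n r := by
  set p : Fin (n + 1) := ⟨r, by omega⟩
  have hiff : ∀ σ τ, (∀ s, σ (p.succAbove s) = (σ p).succAbove (τ s)) →
      ((permSeq σ r = numMatched (permSeq σ) r ∧
          numMatched (permSeq σ) (r + 1) ≤ permSeq σ (r + 1)) ↔
        (numMatched (permSeq τ) r = σ p ∧ numMatched (permSeq τ) r ≤ permSeq τ r)) :=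
    fun σ τ h => hit_and_matched_succ_iff_of_succAbove
      (fun s hs => by simpa [hs] using permSeq_of_comp_succAbove hr h hs.le)
      (by simpa using permSeq_of_comp_succAbove hr h le_rfl) (permSeq_val σ p)
  have hlt : ∀ τ : Perm (Fin n), numMatched (permSeq τ) r < n + 1 := fun τ => by
    have := numMatched_le (f := permSeq τ) r; omega
  refine card_nbij' (deletePerm p) (fun τ => insertPerm p ⟨_, hlt τ⟩ τ) ?_ ?_ ?_ ?_
  · intro σ hσ
    simp only [coe_filter, mem_univ, true_and, Set.mem_ofPred_eq] at hσ ⊢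
    exact ((hiff σ _ (apply_succAbove_eq_succAbove_deletePerm p σ)).1 hσ).2
  · intro τ hτ
    simp only [coe_filter, mem_univ, true_and, Set.mem_ofPred_eq] at hτ ⊢
    exact (hiff _ τ (by simp)).2 ⟨by simp, hτ⟩
  · intro σ hσ
    simp only [coe_filter, mem_univ, true_and, Set.mem_ofPred_eq] at hσ
    have hq := ((hiff σ _ (apply_succAbove_eq_succAbove_deletePerm p σ)).1 hσ).1
    simp only [hq, Fin.eta, insertPerm_deletePerm]
  · intro τ _
    exact deletePerm_insertPerm _ _ τ

lemma matchedAtCount_add_card_not_matched (n r : ℕ) :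
    matchedAtCount n r + #{σ : Perm (Fin n) | ¬numMatched (permSeq σ) r ≤ permSeq σ r} = n ! := by
  rw [matchedAtCount]
  convert card_filter_add_card_filter_not (s := (univ : Finset (Perm (Fin n)))) _
  rw [card_univ, Fintype.card_perm, Fintype.card_fin]

lemma matchedAtCount_succ_add {n r : ℕ} (hr : r < n) :
    matchedAtCount (n + 1) (r + 1) + matchedAtCount n r = matchedAtCount (n + 1) r := by
  have h₀ := matchedAtCount_add_card_not_matched (n + 1) r
  have h₁ := matchedAtCount_add_card_not_matched (n + 1) (r + 1)
  have hswap := card_not_matched_succ (n := n + 1) (show r + 1 < n + 1 by omega)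
  rw [card_hit_matched_succ hr] at hswap
  omega

def derangementSum (n r : ℕ) : ℤ := ∑ j ∈ range (r + 1), (-1) ^ j * r.choose j * (n - j)!

lemma derangementSum_zero (n : ℕ) : derangementSum n 0 = n ! := by
  simp [derangementSum]

lemma alternating_sum_choose_mul_factorial_succ (n k m : ℕ) :
    ∑ j ∈ range (m + 1), (-1 : ℤ) ^ j * k.choose j * (n + 1 - j)! =
      (n + 1)! - ∑ i ∈ range m, (-1 : ℤ) ^ i * k.choose (i + 1) * (n - i)! := by
  rw [sum_range_succ', sub_eq_neg_add, ← sum_neg_distrib]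
  congr 1
  · refine sum_congr rfl fun i _ => ?_
    rw [Nat.add_sub_add_right, pow_succ]; ring
  · simp

lemma derangementSum_succ_succ (n r : ℕ) :
    derangementSum (n + 1) (r + 1) = derangementSum (n + 1) r - derangementSum n r := by
  have htop : ∑ i ∈ range (r + 1), (-1 : ℤ) ^ i * r.choose (i + 1) * (n - i)! =
      ∑ i ∈ range r, (-1 : ℤ) ^ i * r.choose (i + 1) * (n - i)! := by
    rw [sum_range_succ, Nat.choose_succ_self, Nat.cast_zero, mul_zero, zero_mul, add_zero]
  simp only [derangementSum, alternating_sum_choose_mul_factorial_succ, Nat.choose_succ_succ',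
    Nat.cast_add, mul_add, add_mul, sum_add_distrib, htop]
  ring

lemma matchedAtCount_eq_derangementSum {n r : ℕ} (hr : r < n) :
    (matchedAtCount n r : ℤ) = derangementSum n r := by
  induction n generalizing r with
  | zero => omega
  | succ n ihn =>
    induction r with
    | zero =>
      rw [derangementSum_zero, matchedAtCount]
      simp [numMatched, Fintype.card_perm]
    | succ r ihr =>
      have hrec := matchedAtCount_succ_add (show r < n by omega)
      rw [derangementSum_succ_succ, ← ihr (by omega), ← ihn (by omega), ← hrec]
      push_cast
      ring

lemma sum_range_choose_eq (n j : ℕ) : ∑ r ∈ range n, r.choose j = n.choose (j + 1) := by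
  induction n with
  | zero => simp
  | succ n ih => rw [sum_range_succ, ih, Nat.choose_succ_succ', add_comm]

lemma sum_derangementSum (n : ℕ) :
    ∑ r ∈ range n, derangementSum n r =
      ∑ j ∈ range n, (-1 : ℤ) ^ j * n.choose (j + 1) * (n - j)! := by
  have hextend : ∀ r ∈ range n, derangementSum n r =
      ∑ j ∈ range n, (-1 : ℤ) ^ j * r.choose j * (n - j)! := fun r hr => by
    refine sum_subset (range_subset_range.2 (by simpa using hr)) fun j _ hj => ?_
    rw [Nat.choose_eq_zero_of_lt (by simpa using hj), Nat.cast_zero, mul_zero, zero_mul]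
  rw [sum_congr rfl hextend, sum_comm]
  refine sum_congr rfl fun j _ => ?_
  rw [← sum_mul, ← mul_sum, ← Nat.cast_sum, sum_range_choose_eq]

def expNegOnePartialSum (m : ℕ) : ℝ := ∑ k ∈ range m, (-1) ^ k * (k ! : ℝ)⁻¹

lemma expNegOnePartialSum_succ (m : ℕ) :
    expNegOnePartialSum (m + 1) = expNegOnePartialSum m + (-1) ^ m * (m ! : ℝ)⁻¹ :=
  sum_range_succ _ _

lemma exp_neg_one_le_expNegOnePartialSum_odd (k : ℕ) :
    Real.exp (-1) ≤ expNegOnePartialSum (2 * k + 1) := by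
  have hsum : HasSum (fun i => (-1 : ℝ) ^ i * (i ! : ℝ)⁻¹) (Real.exp (-1)) := by
    simpa [div_eq_mul_inv, Real.exp_eq_exp_ℝ] using
      NormedSpace.expSeries_div_hasSum_exp (-1 : ℝ)
  refine Antitone.tendsto_le_alternating_series hsum.tendsto_sum_nat (fun i j hij => ?_) k
  exact inv_anti₀ (by positivity) (by exact_mod_cast Nat.factorial_le hij)

lemma inv_factorial_succ_mul (m : ℕ) : ((m + 1)! : ℝ)⁻¹ * (m + 1) = (m ! : ℝ)⁻¹ := by
  rw [Nat.factorial_succ, Nat.cast_mul, mul_inv, mul_comm, ← mul_assoc]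
  push_cast
  rw [mul_inv_cancel₀ (by positivity), one_mul]

lemma le_three_mul_exp_neg_one : (25 : ℝ) / 24 ≤ 3 * Real.exp (-1) := by
  rw [Real.exp_neg, ← div_eq_mul_inv, le_div_iff₀ (Real.exp_pos 1)]
  linarith [Real.exp_one_lt_d9]

lemma expNegOnePartialSum_two_mul_succ (k : ℕ) :
    expNegOnePartialSum (2 * k + 1) = expNegOnePartialSum (2 * k) + ((2 * k)! : ℝ)⁻¹ := by
  rw [expNegOnePartialSum_succ, (even_two_mul k).neg_one_pow, one_mul]

lemma expNegOnePartialSum_two_mul_add_two (k : ℕ) :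
    expNegOnePartialSum (2 * k + 2) = expNegOnePartialSum (2 * k + 1) - ((2 * k + 1)! : ℝ)⁻¹ := by
  rw [expNegOnePartialSum_succ, (odd_two_mul_add_one k).neg_one_pow, neg_one_mul, sub_eq_add_neg]

lemma exp_neg_one_add_inv_factorial_sub_le (k : ℕ) :
    Real.exp (-1) + ((2 * k + 1)! : ℝ)⁻¹ - ((2 * k + 2)! : ℝ)⁻¹ ≤
      expNegOnePartialSum (2 * k + 1) := by
  have h := exp_neg_one_le_expNegOnePartialSum_odd (k + 1)
  rw [expNegOnePartialSum_two_mul_succ, show 2 * (k + 1) = 2 * k + 2 by ring,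
    expNegOnePartialSum_two_mul_add_two] at h
  linarith

lemma one_add_mul_exp_neg_one_le (n : ℕ) :
    1 + (n - 1) * Real.exp (-1) ≤
      (n + 1) * expNegOnePartialSum (n + 1) + expNegOnePartialSum n := by
  have he := le_three_mul_exp_neg_one
  obtain ⟨k, rfl | rfl⟩ := Nat.even_or_odd' n
  · have h := exp_neg_one_add_inv_factorial_sub_le k
    have h₁ := inv_factorial_succ_mul (2 * k)
    have h₂ := inv_factorial_succ_mul (2 * k + 1)
    rw [expNegOnePartialSum_two_mul_succ] at h ⊢
    push_cast at h₁ h₂ ⊢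
    linarith [mul_le_mul_of_nonneg_left h (by positivity : (0 : ℝ) ≤ 2 * k + 2)]
  · rcases Nat.eq_zero_or_pos k with rfl | hk
    · simp [expNegOnePartialSum, sum_range_succ]
    have h := exp_neg_one_add_inv_factorial_sub_le k
    have h₁ := inv_factorial_succ_mul (2 * k + 1)
    have h₂ : (((2 * k + 1 + 1)! : ℕ) : ℝ)⁻¹ ≤ 24⁻¹ := by
      refine inv_anti₀ (by norm_num) ?_
      exact_mod_cast (Nat.factorial_le (show 4 ≤ 2 * k + 1 + 1 by omega) : 4 ! ≤ _)
    rw [expNegOnePartialSum_two_mul_add_two]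
    push_cast at h h₁ h₂ ⊢
    linarith [mul_le_mul_of_nonneg_left h (by positivity : (0 : ℝ) ≤ 2 * k + 3)]

lemma choose_succ_mul_factorial_sub {n j : ℕ} (hj : j < n) :
    (n.choose (j + 1) * (n - j)! : ℝ) = n ! * ((n + 1) * ((j + 1)! : ℝ)⁻¹ - (j ! : ℝ)⁻¹) := by
  have hfac : (n - j)! = (n - j) * (n - (j + 1))! := by
    rw [show n - j = n - (j + 1) + 1 by omega, Nat.factorial_succ]
  have hchoose := Nat.choose_mul_factorial_mul_factorial (show j + 1 ≤ n by omega)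
  rw [hfac, ← hchoose, Nat.factorial_succ]
  push_cast [Nat.cast_sub hj.le]
  field_simp
  ring

lemma sum_neg_one_pow_mul_inv_factorial_succ (n : ℕ) :
    ∑ j ∈ range n, (-1) ^ j * ((j + 1)! : ℝ)⁻¹ = 1 - expNegOnePartialSum (n + 1) := by
  rw [expNegOnePartialSum, sum_range_succ']
  simp [pow_succ, ← sum_neg_distrib]

lemma aVal_eq_factorial_mul (n : ℕ) :
    (aVal n : ℝ) =
      n ! * (n + 1 - ((n + 1) * expNegOnePartialSum (n + 1) + expNegOnePartialSum n)) := by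
  have hℤ : (aVal n : ℤ) = ∑ j ∈ range n, (-1 : ℤ) ^ j * n.choose (j + 1) * (n - j)! := by
    rw [aVal_eq_sum_matchedAtCount, Nat.cast_sum, ← sum_derangementSum]
    exact sum_congr rfl fun r hr => matchedAtCount_eq_derangementSum (mem_range.1 hr)
  rw [← Int.cast_natCast, hℤ]
  push_cast
  have hterm : ∀ j ∈ range n, (-1 : ℝ) ^ j * n.choose (j + 1) * (n - j)! =
      n ! * ((n + 1) * ((-1) ^ j * ((j + 1)! : ℝ)⁻¹)) - n ! * ((-1) ^ j * (j ! : ℝ)⁻¹) :=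
    fun j hj => by rw [mul_assoc, choose_succ_mul_factorial_sub (mem_range.1 hj)]; ring
  rw [sum_congr rfl hterm, sum_sub_distrib, ← mul_sum, ← mul_sum, ← mul_sum,
    sum_neg_one_pow_mul_inv_factorial_succ, ← expNegOnePartialSum]
  ring

theorem stmt_9_general (n : ℕ) :
    (aVal n : ℝ) ≤ ((1 - 1 / Real.exp 1) * n + 1 / Real.exp 1) * Nat.factorial n := by
  have h := one_add_mul_exp_neg_one_le n
  rw [aVal_eq_factorial_mul, mul_comm, one_div, ← Real.exp_neg]
  gcongr
  linarith

/-- For every integer `n ≥ 1`, `a(n) ≤ ((1 − 1/e)n + 1/e) ⬝ n!`: the expected size of the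
matching produced by Ranking on `MonotoneG` under a uniformly random permutation is at
most `(1 − 1/e)n + 1/e`. -/
theorem stmt_9 (n : ℕ) (hn : 1 ≤ n) :
    (aVal n : ℝ) ≤ ((1 - 1 / Real.exp 1) * n + 1 / Real.exp 1) * Nat.factorial n :=
  stmt_9_general n
end
end

section
/- For every integer n ≥ 1, every permutation π of {1, …, n}, and every j with 1 ≤ j < n: if u_{j+1} is matched by the Ranking greedy process on MonotoneG with permutation π, then u_j is also matched; consequently the set of matched vertices of U is a prefix u_1, …, u_k of U. -/
open scoped Classical

noncomputable section

/-!
On `MonotoneG` the neighbourhoods of `u_0, u_1, …` shrink. If `u_j` finds no free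
neighbour, it matches nothing, so `u_{j+1}` faces the same matched set with a smaller
neighbourhood and finds no free neighbour either. Hence the unmatched arrivals form a
final segment.
-/

lemma pickMin_eq_none_iff {n : ℕ} {α : Type*} [LinearOrder α] (key : Fin n → α)
    (c : Finset (Fin n)) : pickMin key c = none ↔ c = ∅ := by
  unfold pickMin
  split <;> simp_all [← Finset.nonempty_iff_ne_empty]

section Greedy

variable {n : ℕ} {α : Type*} [LinearOrder α] {adj : ℕ → Fin n → Prop} {key : Fin n → α}

lemma greedyRun_succ_of_greedyMatchU_eq_none {j : ℕ} (h : greedyMatchU adj key j = none) :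
    greedyRun adj key (j + 1) = greedyRun adj key j := by
  rw [greedyMatchU] at h
  simp only [greedyRun, h]

lemma greedyMatchU_succ_eq_none (hadj : Antitone adj) {j : ℕ}
    (h : greedyMatchU adj key j = none) : greedyMatchU adj key (j + 1) = none := by
  have hrun := greedyRun_succ_of_greedyMatchU_eq_none h
  rw [greedyMatchU, pickMin_eq_none_iff] at h ⊢
  rw [hrun, ← Finset.subset_empty, ← h]
  exact Finset.sdiff_subset_sdiff
    (Finset.monotone_filter_right _ fun i _ => hadj j.le_succ i) le_rfl

lemma antitone_greedyMatchU_ne_none (hadj : Antitone adj) :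
    Antitone fun j => greedyMatchU adj key j ≠ none :=
  antitone_nat_of_succ_le fun _ h hnone => h (greedyMatchU_succ_eq_none hadj hnone)

end Greedy

lemma antitone_monoAdj (n : ℕ) : Antitone (monoAdj n) :=
  fun _ _ hjj' _ hi => le_trans hjj' hi

lemma Nat.exists_iff_lt_of_antitone {P : ℕ → Prop} (hP : Antitone P) (n : ℕ) :
    ∃ k ≤ n, ∀ j < n, (P j ↔ j < k) := by
  have hex : ∃ k, k = n ∨ ¬P k := ⟨n, .inl rfl⟩
  refine ⟨Nat.find hex, Nat.find_min' hex (.inl rfl), fun j hj => ⟨fun hPj => ?_, fun hjk => ?_⟩⟩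
  · by_contra! hkj
    rcases Nat.find_spec hex with hk | hk
    · omega
    · exact hk (hP hkj hPj)
  · exact not_not.mp (not_or.mp (Nat.find_min hex hjk)).2

theorem stmt_12_general (n : ℕ) (π : Equiv.Perm (Fin n)) :
    (∀ j : ℕ, j + 1 < n →
      greedyMatchU (monoAdj n) (fun i => π i) (j + 1) ≠ none →
      greedyMatchU (monoAdj n) (fun i => π i) j ≠ none) ∧
    (∃ k ≤ n, ∀ j < n, (greedyMatchU (monoAdj n) (fun i => π i) j ≠ none ↔ j < k)) := by
  have hmatched := antitone_greedyMatchU_ne_none (key := fun i => π i) (antitone_monoAdj n)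
  exact ⟨fun j _ => hmatched j.le_succ, Nat.exists_iff_lt_of_antitone hmatched n⟩

/-- For every `n ≥ 1`, every permutation `π` and every `j` (0-indexed, with `j + 1 < n`):
if `u_{j+1}` is matched by the Ranking greedy process on `MonotoneG` with permutation `π`,
then so is `u_j`; consequently the set of matched vertices of `U` is a prefix of `U`. -/
theorem stmt_12 (n : ℕ) (hn : 1 ≤ n) (π : Equiv.Perm (Fin n)) :
    (∀ j : ℕ, j + 1 < n →
      greedyMatchU (monoAdj n) (fun i => π i) (j + 1) ≠ none →
      greedyMatchU (monoAdj n) (fun i => π i) j ≠ none) ∧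
    (∃ k ≤ n, ∀ j < n, (greedyMatchU (monoAdj n) (fun i => π i) j ≠ none ↔ j < k)) :=
  stmt_12_general n π

end
end
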